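/- For Re(z) > −2 and complex w, the double integral ∫₀^∞ ∫₀^∞ u^z v^z e^{−v²(u²+1)} sin(wv) sinh(wuv) du dv equals (π w/4) Γ(1 + z/2) erf(w/2) ₁F₁(1 + z/2; 3/2; w²/4). -/

import Mathlib

open Real MeasureTheory Set

/-- Pochhammer symbol `(a)_n`. -/
noncomputable def poch (a : ℂ) (n : ℕ) : ℂ := ∏ i ∈ Finset.range n, (a + i)

/-- Confluent hypergeometric function `₁F₁(a;c;z)`. -/
noncomputable def hyp1F1 (a c z : ℂ) : ℂ :=
  ∑' n : ℕ, poch a n / poch c n * z ^ n / (n.factorial : ℂ)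

/-- The error function extended to complex argument via its entire power series. -/
noncomputable def cerf (w : ℂ) : ℂ :=
  (2 / (Real.sqrt π : ℂ)) * ∑' n : ℕ, (-1)^n * w^(2*n+1) / ((n.factorial : ℂ) * (2*n+1))

/-! The substitution `t = uv` in the inner integral separates the variables: the double integral is
`(∫₀^∞ t^z e^{-t²} sinh(wt) dt) · (∫₀^∞ t⁻¹ e^{-t²} sin(wt) dt)`. Expanding `sinh` in its power
series and integrating termwise against the Gaussian Mellin transform
`∫₀^∞ t^{s-1} e^{-t²} dt = Γ(s/2)/2` gives the first factor as
`(w/2) Γ(1+z/2) ₁F₁(1+z/2; 3/2; w²/4)`, the Pochhammer symbols coming from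
`Γ(1+z/2+n) = Γ(1+z/2) (1+z/2)ₙ` and `(2n+1)! = (3/2)ₙ 4ⁿ n!`. Since `sin(wt) = -i sinh(iwt)`, the
second factor is the case `z = -1` of the first, which is `(π/2) erf(w/2)` because
`erf w = (2w/√π) ₁F₁(1/2; 3/2; -w²)`. -/

open scoped Nat

lemma poch_succ (a : ℂ) (n : ℕ) : poch a (n + 1) = poch a n * (a + n) :=
  Finset.prod_range_succ _ n

lemma poch_succ' (a : ℂ) (n : ℕ) : poch a (n + 1) = a * poch (a + 1) n := by
  rw [poch, Finset.prod_range_succ', mul_comm, poch]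
  congr 1
  · simp
  · exact Finset.prod_congr rfl fun i _ => by push_cast; ring

lemma poch_ne_zero {a : ℂ} (ha : 0 < a.re) (n : ℕ) : poch a n ≠ 0 :=
  Finset.prod_ne_zero_iff.mpr fun i _ h => by
    have := congrArg Complex.re h
    simp only [Complex.add_re, Complex.natCast_re, Complex.zero_re] at this
    linarith [(i.cast_nonneg : (0:ℝ) ≤ i)]

lemma poch_eq_eval_ascPochhammer (a : ℂ) (n : ℕ) : poch a n = (ascPochhammer ℂ n).eval a := by
  induction n with
  | zero => simp [poch]
  | succ n ih => rw [poch_succ, ascPochhammer_succ_eval, ih]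

lemma Gamma_add_nat_eq_Gamma_mul_poch {s : ℂ} (hs : ∀ k : ℕ, s ≠ -k) (n : ℕ) :
    Complex.Gamma (s + n) = Complex.Gamma s * poch s n := by
  rw [poch_eq_eval_ascPochhammer, ← Complex.Gamma_add_nat_div_Gamma_eq s hs,
    mul_div_cancel₀ _ (Complex.Gamma_ne_zero hs)]

lemma poch_three_halves_mul (n : ℕ) : poch (3 / 2) n * (4 ^ n * n !) = ((2 * n + 1)! : ℂ) := by
  induction n with
  | zero => simp [poch]
  | succ n ih =>
    rw [poch_succ, show 2 * (n + 1) + 1 = (2 * n + 1 + 1) + 1 by ring, Nat.factorial_succ,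
      Nat.factorial_succ, Nat.factorial_succ]
    push_cast at ih ⊢
    linear_combination (2 * (n : ℂ) + 2) * (2 * n + 3) * ih

lemma poch_one_half_mul (n : ℕ) : poch (1 / 2) n * (2 * n + 1) = poch (3 / 2) n := by
  have h := (poch_succ (1 / 2) n).symm.trans (poch_succ' (1 / 2) n)
  norm_num at h
  linear_combination 2 * h

lemma norm_cpow_mul_exp_neg_sq {t : ℝ} (ht : 0 < t) (s : ℂ) :
    ‖(t : ℂ) ^ (s - 1) * (rexp (-t ^ 2) : ℂ)‖ = t ^ (s.re - 1) * rexp (-t ^ (2 : ℝ)) := by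
  rw [norm_mul, Complex.norm_cpow_eq_rpow_re_of_pos ht, Complex.norm_real,
    Real.norm_of_nonneg (exp_pos _).le, rpow_two]
  simp

lemma integrableOn_cpow_mul_exp_neg_sq {s : ℂ} (hs : 0 < s.re) :
    IntegrableOn (fun t : ℝ => (t : ℂ) ^ (s - 1) * (rexp (-t ^ 2) : ℂ)) (Ioi 0) := by
  refine Integrable.mono'
    (integrableOn_rpow_mul_exp_neg_rpow (s := s.re - 1) (by linarith) two_pos) ?_ ?_
  · refine ContinuousOn.aestronglyMeasurable (fun t ht => ?_) measurableSet_Ioi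
    exact ((Complex.continuousAt_ofReal_cpow_const _ _ (Or.inr (ne_of_gt ht))).mul
      (by fun_prop)).continuousWithinAt
  · filter_upwards [ae_restrict_mem measurableSet_Ioi] with t ht
    rw [norm_cpow_mul_exp_neg_sq ht]

lemma integral_norm_cpow_mul_exp_neg_sq {s : ℂ} (hs : 0 < s.re) :
    ∫ t in Ioi (0 : ℝ), ‖(t : ℂ) ^ (s - 1) * (rexp (-t ^ 2) : ℂ)‖ = Real.Gamma (s.re / 2) / 2 := by
  rw [setIntegral_congr_fun measurableSet_Ioi fun t ht => norm_cpow_mul_exp_neg_sq ht s,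
    integral_rpow_mul_exp_neg_rpow two_pos (by linarith)]
  ring_nf

lemma integral_cpow_mul_exp_neg_sq {s : ℂ} (hs : 0 < s.re) :
    ∫ t in Ioi (0 : ℝ), (t : ℂ) ^ (s - 1) * (rexp (-t ^ 2) : ℂ) = Complex.Gamma (s / 2) / 2 := by
  have h := mellin_comp_rpow (fun t : ℝ => (rexp (-t) : ℂ)) s 2
  rw [← Complex.GammaIntegral_eq_mellin, ← Complex.Gamma_eq_integral (by simpa using hs)] at h
  simp only [mellin, rpow_two, smul_eq_mul] at h
  rw [h]
  norm_num [div_eq_inv_mul]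

lemma integral_cpow_mul_exp_neg_sq_mul_tsum {a : ℂ} (ha : -2 < a.re) {c : ℕ → ℂ}
    (hc : Summable fun n : ℕ => ‖c n‖ * Real.Gamma (a.re / 2 + 1 + n)) :
    ∫ t in Ioi (0 : ℝ), (t : ℂ) ^ a * (rexp (-t ^ 2) : ℂ) * ∑' n : ℕ, c n * (t : ℂ) ^ (2 * n + 1)
      = ∑' n : ℕ, c n * (Complex.Gamma (a / 2 + 1 + n) / 2) := by
  set s : ℕ → ℂ := fun n => a + 2 * n + 2
  have hs : ∀ n, 0 < (s n).re := fun n => by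
    simp only [s, Complex.add_re, Complex.mul_re, Complex.natCast_re, Complex.natCast_im]
    norm_num
    linarith [(n.cast_nonneg : (0 : ℝ) ≤ n)]
  set F : ℕ → ℝ → ℂ := fun n t => c n * ((t : ℂ) ^ (s n - 1) * (rexp (-t ^ 2) : ℂ))
  have hF_int : ∀ n, Integrable (F n) (volume.restrict (Ioi 0)) := fun n =>
    (integrableOn_cpow_mul_exp_neg_sq (hs n)).const_mul (c n)
  have hF_sum : Summable fun n => ∫ t in Ioi (0 : ℝ), ‖F n t‖ := by
    refine (hc.div_const 2).congr fun n => ?_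
    simp_rw [F, norm_mul (c n)]
    rw [integral_const_mul, integral_norm_cpow_mul_exp_neg_sq (hs n), mul_div_assoc]
    congr 3
    simp only [s, Complex.add_re, Complex.mul_re, Complex.re_ofNat, Complex.natCast_re,
      Complex.im_ofNat, Complex.natCast_im, mul_zero, sub_zero]
    ring
  have hF_eq : ∀ t ∈ Ioi (0 : ℝ),
      (t : ℂ) ^ a * (rexp (-t ^ 2) : ℂ) * ∑' n : ℕ, c n * (t : ℂ) ^ (2 * n + 1) = ∑' n, F n t := by
    intro t ht
    rw [← tsum_mul_left]
    refine tsum_congr fun n => ?_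
    have : (t : ℂ) ^ (s n - 1) = (t : ℂ) ^ a * (t : ℂ) ^ (2 * n + 1) := by
      rw [← Complex.cpow_natCast, ← Complex.cpow_add _ _ (by exact_mod_cast ht.ne')]
      push_cast [s]
      ring_nf
    simp only [F, this]
    ring
  rw [setIntegral_congr_fun measurableSet_Ioi hF_eq,
    ← integral_tsum_of_summable_integral_norm hF_int hF_sum]
  refine tsum_congr fun n => ?_
  rw [integral_const_mul, integral_cpow_mul_exp_neg_sq (hs n)]
  congr 3
  simp only [s]
  ring

lemma summable_pow_div_factorial_mul_Gamma (r : ℝ) {b : ℝ} (hb : 0 < b) :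
    Summable fun n : ℕ => r ^ (2 * n + 1) / (2 * n + 1)! * Real.Gamma (b + n) := by
  refine summable_of_ratio_norm_eventually_le (r := 1 / 2) (by norm_num) ?_
  filter_upwards [Filter.eventually_ge_atTop ⌈r ^ 2 * (b + 1)⌉₊] with n hn
  have hn : r ^ 2 * (b + 1) ≤ n := (Nat.le_ceil _).trans (by exact_mod_cast hn)
  have hbn : 0 < b + n := by positivity
  have hratio : r ^ (2 * (n + 1) + 1) / (2 * (n + 1) + 1 : ℕ)! * Real.Gamma (b + (n + 1 : ℕ))
      = r ^ (2 * n + 1) / (2 * n + 1)! * Real.Gamma (b + n)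
        * (r ^ 2 * (b + n) / ((2 * n + 2) * (2 * n + 3))) := by
    rw [show 2 * (n + 1) + 1 = (2 * n + 1 + 1) + 1 by ring, Nat.factorial_succ, Nat.factorial_succ,
      Nat.cast_succ, ← add_assoc, Real.Gamma_add_one hbn.ne']
    push_cast
    field_simp
    ring
  have hsmall : r ^ 2 * (b + n) / ((2 * n + 2) * (2 * n + 3)) ≤ 1 / 2 := by
    rw [div_le_iff₀ (by positivity)]
    nlinarith [sq_nonneg r, mul_nonneg (sq_nonneg r) (mul_nonneg hb.le (n.cast_nonneg : (0:ℝ) ≤ n))]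
  rw [hratio, norm_mul, mul_comm (1 / 2)]
  gcongr
  rw [Real.norm_of_nonneg (by positivity)]
  exact hsmall

theorem integral_cpow_mul_exp_neg_sq_mul_sinh {z : ℂ} (hz : -2 < z.re) (w : ℂ) :
    ∫ t in Ioi (0 : ℝ), (t : ℂ) ^ z * (rexp (-t ^ 2) : ℂ) * Complex.sinh (w * t)
      = w / 2 * Complex.Gamma (1 + z / 2) * hyp1F1 (1 + z / 2) (3 / 2) (w ^ 2 / 4) := by
  have hsinh : ∀ t : ℝ, Complex.sinh (w * t)
      = ∑' n : ℕ, w ^ (2 * n + 1) / (2 * n + 1)! * (t : ℂ) ^ (2 * n + 1) := fun t => by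
    simp_rw [Complex.sinh_eq_tsum, mul_pow, mul_div_right_comm]
  have hsum : Summable fun n : ℕ =>
      ‖w ^ (2 * n + 1) / (2 * n + 1)!‖ * Real.Gamma (z.re / 2 + 1 + n) := by
    simpa [Complex.norm_natCast] using
      summable_pow_div_factorial_mul_Gamma ‖w‖ (b := z.re / 2 + 1) (by linarith)
  have hpole : ∀ k : ℕ, 1 + z / 2 ≠ -k := fun k h => by
    have hre := congrArg Complex.re h
    simp only [Complex.add_re, Complex.one_re, Complex.div_ofNat_re, Complex.neg_re,
      Complex.natCast_re] at hre
    linarith [(k.cast_nonneg : (0 : ℝ) ≤ k)]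
  simp_rw [hsinh]
  rw [integral_cpow_mul_exp_neg_sq_mul_tsum hz hsum, hyp1F1, ← tsum_mul_left]
  refine tsum_congr fun n => ?_
  rw [show z / 2 + 1 + n = 1 + z / 2 + n by ring, Gamma_add_nat_eq_Gamma_mul_poch hpole,
    ← poch_three_halves_mul]
  have hpoch := poch_ne_zero (a := 3 / 2) (by norm_num) n
  rw [div_pow]
  field_simp
  ring

lemma cerf_eq_mul_hyp1F1 (w : ℂ) : cerf w = 2 / √π * w * hyp1F1 (1 / 2) (3 / 2) (-w ^ 2) := by
  rw [cerf, hyp1F1, mul_assoc, ← tsum_mul_left (a := w)]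
  congr 1
  refine tsum_congr fun n => ?_
  have h := poch_one_half_mul n
  have hpoch := poch_ne_zero (a := 1 / 2) (by norm_num) n
  have hodd : (2 * n + 1 : ℂ) ≠ 0 := by exact_mod_cast (2 * n).succ_ne_zero
  rw [← h]
  field_simp
  ring

theorem integral_inv_mul_exp_neg_sq_mul_sin (w : ℂ) :
    ∫ t in Ioi (0 : ℝ), (t : ℂ)⁻¹ * (rexp (-t ^ 2) : ℂ) * Complex.sin (w * t)
      = π / 2 * cerf (w / 2) := by
  have hsin : ∀ t : ℝ, (t : ℂ)⁻¹ * (rexp (-t ^ 2) : ℂ) * Complex.sin (w * t)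
      = -Complex.I *
        ((t : ℂ) ^ (-1 : ℂ) * (rexp (-t ^ 2) : ℂ) * Complex.sinh (w * Complex.I * t)) :=
    fun t => by
      rw [Complex.cpow_neg_one, mul_right_comm w, Complex.sinh_mul_I]
      linear_combination ((t : ℂ)⁻¹ * (rexp (-t ^ 2) : ℂ) * Complex.sin (w * t)) * Complex.I_sq
  have hGamma : Complex.Gamma (1 / 2) = √π := by
    rw [show (1 / 2 : ℂ) = ((1 / 2 : ℝ) : ℂ) by push_cast; ring, Complex.Gamma_ofReal,
      Real.Gamma_one_half_eq]
  have hpi : (π : ℂ) = √π * √π := by rw [← Complex.ofReal_mul, Real.mul_self_sqrt pi_pos.le]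
  have hsqrt : (√π : ℂ) ≠ 0 := by exact_mod_cast (Real.sqrt_pos.mpr pi_pos).ne'
  simp_rw [hsin]
  rw [integral_const_mul, integral_cpow_mul_exp_neg_sq_mul_sinh (by norm_num), cerf_eq_mul_hyp1F1]
  have hparam : 1 + (-1 : ℂ) / 2 = 1 / 2 := by norm_num
  have harg : (w * Complex.I) ^ 2 / 4 = -(w / 2) ^ 2 := by rw [mul_pow, Complex.I_sq]; ring
  rw [hparam, harg, hGamma, hpi]
  generalize hyp1F1 (1 / 2) (3 / 2) (-(w / 2) ^ 2) = F
  field_simp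
  linear_combination (-w * F) * Complex.I_sq

lemma inner_integral_eq_integral_sinh_mul (z w : ℂ) {v : ℝ} (hv : 0 < v) :
    ∫ u in Ioi (0 : ℝ), (u : ℂ) ^ z * (v : ℂ) ^ z * (rexp (-v ^ 2 * (u ^ 2 + 1)) : ℂ) *
        Complex.sin (w * v) * Complex.sinh (w * u * v)
      = (∫ t in Ioi (0 : ℝ), (t : ℂ) ^ z * (rexp (-t ^ 2) : ℂ) * Complex.sinh (w * t)) *
        ((v : ℂ)⁻¹ * (rexp (-v ^ 2) : ℂ) * Complex.sin (w * v)) := by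
  set g : ℝ → ℂ := fun t => (t : ℂ) ^ z * (rexp (-t ^ 2) : ℂ) * Complex.sinh (w * t)
  have hg : ∀ u ∈ Ioi (0 : ℝ), (u : ℂ) ^ z * (v : ℂ) ^ z * (rexp (-v ^ 2 * (u ^ 2 + 1)) : ℂ) *
        Complex.sin (w * v) * Complex.sinh (w * u * v)
      = ((rexp (-v ^ 2) : ℂ) * Complex.sin (w * v)) * g (u * v) := fun u hu => by
    have hexp : rexp (-v ^ 2 * (u ^ 2 + 1)) = rexp (-(u * v) ^ 2) * rexp (-v ^ 2) := by
      rw [← exp_add]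
      ring_nf
    simp only [g, Complex.ofReal_mul, Complex.mul_cpow_ofReal_nonneg (le_of_lt hu) hv.le, hexp]
    push_cast
    rw [← mul_assoc w]
    ring
  rw [setIntegral_congr_fun measurableSet_Ioi hg, integral_const_mul,
    integral_comp_mul_right_Ioi g 0 hv, zero_mul, Complex.real_smul]
  push_cast
  ring

/-- For `Re(z) > −2` and complex `w`,
`∫₀^∞∫₀^∞ u^z v^z e^{−v²(u²+1)} sin(wv) sinh(wuv) du dv
  = (πw/4) Γ(1+z/2) erf(w/2) ₁F₁(1+z/2;3/2;w²/4)`. -/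
theorem double_integral_sin_sinh (z w : ℂ) (hz : -2 < z.re) :
    ∫ v in Ioi (0:ℝ), ∫ u in Ioi (0:ℝ),
        (u:ℂ)^z * (v:ℂ)^z * (Real.exp (-v^2*(u^2+1)) : ℂ) *
          Complex.sin (w * v) * Complex.sinh (w * u * v)
      = ((π:ℂ) * w / 4) * Complex.Gamma (1 + z/2) * cerf (w/2) *
        hyp1F1 (1 + z/2) (3/2) (w^2/4) := by
  rw [setIntegral_congr_fun measurableSet_Ioi fun v hv =>
      inner_integral_eq_integral_sinh_mul z w hv, integral_const_mul,
    integral_cpow_mul_exp_neg_sq_mul_sinh hz,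
    integral_inv_mul_exp_neg_sq_mul_sin]
  ring
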